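/- Let κ be a positive integer, let t₁, t₂ be real numbers, let x₁, x₂ ≥ 2, and for j = 1, 2 let f_j : ℕ → ℂ satisfy |f_j(n)| ≤ τ(n)^κ for all n ≥ 1. Then D_κ(f₁, n^{it₁}; x₁) + D_κ(f₂, n^{it₂}; x₂) ≥ 2^{−κ/2} · D_{2κ}(f₁ f₂, n^{i(t₁+t₂)}; min{x₁, x₂}), where f₁ f₂ denotes the pointwise product n ↦ f₁(n) f₂(n). -/

import Mathlib

open Complex Finset

/-- `dnum n` is the number of positive divisors of `n`, i.e. `τ(n)`. -/
def dnum (n : ℕ) : ℕ := n.divisors.card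

/-- Square of the distance `D_m(f, n^{it}; x)`:
`∑_{p ≤ x, p prime} (2^m − Re(f(p) p^{−it}))/p`. -/
noncomputable def Dsq (m : ℕ) (f : ℕ → ℂ) (t : ℝ) (x : ℝ) : ℝ :=
  ∑ p ∈ (Finset.Icc 1 ⌊x⌋₊).filter Nat.Prime,
    ((2 : ℝ) ^ m - (f p * (p : ℂ) ^ (-(I * (t : ℂ)))).re) / p

/-- The distance `D_m(f, n^{it}; x) ≥ 0`. -/
noncomputable def DistFn (m : ℕ) (f : ℕ → ℂ) (t : ℝ) (x : ℝ) : ℝ :=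
  Real.sqrt (Dsq m f t x)

/-! If `‖z‖, ‖w‖ ≤ M` then `M² - re (z w) ≤ M (√(M - re z) + √(M - re w))²`: expanding
`re (z w)` leaves the cross term `im z im w`, and `(im z)² ≤ M² - (re z)² ≤ 2M (M - re z)`.
Apply this at each prime `p` with `M = 2^κ`, `z = f₁(p) p^{-it₁}`, `w = f₂(p) p^{-it₂}`, divide by
`p` and sum; Minkowski's inequality in `ℓ²` then gives
`D_{2κ}(f₁f₂, n^{i(t₁+t₂)}; x)² ≤ 2^κ (D_κ(f₁, n^{it₁}; x) + D_κ(f₂, n^{it₂}; x))²`.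
Finally `D_κ(f, n^{it}; x)` is nondecreasing in `x`, its summands being nonnegative. -/

theorem sq_sub_re_mul_le {M : ℝ} {z w : ℂ} (hz : ‖z‖ ≤ M) (hw : ‖w‖ ≤ M) :
    M ^ 2 - (z * w).re ≤ M * (√(M - z.re) + √(M - w.re)) ^ 2 := by
  have hu : 0 ≤ M - z.re := sub_nonneg.2 ((re_le_norm z).trans hz)
  have hv : 0 ≤ M - w.re := sub_nonneg.2 ((re_le_norm w).trans hw)
  have hM : 0 ≤ M := (norm_nonneg z).trans hz
  have him_sq {v : ℂ} (hv : ‖v‖ ≤ M) : v.im ^ 2 ≤ 2 * M * (M - v.re) := by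
    have h := sq_le_sq' (by linarith [norm_nonneg v]) hv
    rw [← normSq_eq_norm_sq, normSq_apply] at h
    nlinarith [abs_re_le_norm v]
  have him : |z.im * w.im| ≤ 2 * M * (√(M - z.re) * √(M - w.re)) := by
    have h : |z.im * w.im| ≤ √((2 * M * (M - z.re)) * (2 * M * (M - w.re))) :=
      Real.abs_le_sqrt (by
        rw [mul_pow]; exact mul_le_mul (him_sq hz) (him_sq hw) (sq_nonneg _) (by positivity))
    rwa [show (2 * M * (M - z.re)) * (2 * M * (M - w.re)) = (2 * M) ^ 2 * ((M - z.re) * (M - w.re))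
      by ring, Real.sqrt_mul (sq_nonneg _), Real.sqrt_sq (by positivity), Real.sqrt_mul hu] at h
  -- with `u = M - re z`, `v = M - re w`: `M² - re (z w) = M (u + v) - u v + im z im w`
  rw [add_sq, Real.sq_sqrt hu, Real.sq_sqrt hv, mul_re]
  nlinarith [le_abs_self (z.im * w.im), mul_nonneg hu hv]

theorem sq_sub_re_mul_div_le {M : ℝ} {z w : ℂ} (hz : ‖z‖ ≤ M) (hw : ‖w‖ ≤ M) {c : ℝ}
    (hc : 0 ≤ c) :
    (M ^ 2 - (z * w).re) / c ≤ M * (√((M - z.re) / c) + √((M - w.re) / c)) ^ 2 := by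
  rw [Real.sqrt_div' _ hc, Real.sqrt_div' _ hc, ← add_div, div_pow, Real.sq_sqrt hc,
    ← mul_div_assoc]
  exact div_le_div_of_nonneg_right (sq_sub_re_mul_le hz hw) hc

theorem Finset.sum_sq_sqrt_add_sqrt_le {ι : Type*} (s : Finset ι) {a b : ι → ℝ}
    (ha : ∀ i ∈ s, 0 ≤ a i) (hb : ∀ i ∈ s, 0 ≤ b i) :
    ∑ i ∈ s, (√(a i) + √(b i)) ^ 2 ≤ (√(∑ i ∈ s, a i) + √(∑ i ∈ s, b i)) ^ 2 := by
  have hsq {c : ι → ℝ} (hc : ∀ i ∈ s, 0 ≤ c i) : ∑ i ∈ s, √(c i) ^ 2 = ∑ i ∈ s, c i :=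
    sum_congr rfl fun i hi => Real.sq_sqrt (hc i hi)
  have hcs := Real.sum_mul_le_sqrt_mul_sqrt s (fun i => √(a i)) (fun i => √(b i))
  simp only [hsq ha, hsq hb] at hcs
  simp only [add_sq, mul_assoc, sum_add_distrib, ← mul_sum, hsq ha, hsq hb,
    Real.sq_sqrt (sum_nonneg ha), Real.sq_sqrt (sum_nonneg hb)]
  linarith

theorem dnum_prime {p : ℕ} (hp : p.Prime) : dnum p = 2 := by
  rw [dnum, Nat.Prime.divisors hp, card_pair hp.one_lt.ne]

theorem norm_le_two_pow_of_norm_le_dnum_pow {κ : ℕ} {f : ℕ → ℂ}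
    (hf : ∀ n : ℕ, 1 ≤ n → ‖f n‖ ≤ (dnum n : ℝ) ^ κ) {p : ℕ} (hp : p.Prime) :
    ‖f p‖ ≤ 2 ^ κ := by
  simpa [dnum_prime hp] using hf p hp.one_le

theorem norm_natCast_cpow_neg_I_mul {p : ℕ} (hp : 0 < p) (t : ℝ) :
    ‖(p : ℂ) ^ (-(I * t))‖ = 1 := by
  simp [norm_natCast_cpow_of_pos hp]

theorem natCast_cpow_neg_I_mul_add {p : ℕ} (hp : p ≠ 0) (t₁ t₂ : ℝ) :
    (p : ℂ) ^ (-(I * ↑(t₁ + t₂))) = (p : ℂ) ^ (-(I * t₁)) * (p : ℂ) ^ (-(I * t₂)) := by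
  rw [← cpow_add _ _ (Nat.cast_ne_zero.2 hp)]
  push_cast
  ring_nf

section Distance

variable {m : ℕ} {f : ℕ → ℂ}

theorem norm_mul_natCast_cpow_neg_I_mul_le (hf : ∀ p : ℕ, p.Prime → ‖f p‖ ≤ 2 ^ m) (t : ℝ) {p : ℕ} (hp : p.Prime) :
    ‖f p * (p : ℂ) ^ (-(I * t))‖ ≤ 2 ^ m := by
  rw [norm_mul, norm_natCast_cpow_neg_I_mul hp.pos, mul_one]
  exact hf p hp

theorem Dsq_term_nonneg (hf : ∀ p : ℕ, p.Prime → ‖f p‖ ≤ 2 ^ m) (t : ℝ) {p : ℕ}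
    (hp : p.Prime) : 0 ≤ ((2 : ℝ) ^ m - (f p * (p : ℂ) ^ (-(I * t))).re) / p :=
  div_nonneg (sub_nonneg.2 ((re_le_norm _).trans (norm_mul_natCast_cpow_neg_I_mul_le hf t hp))) p.cast_nonneg

theorem DistFn_mono (hf : ∀ p : ℕ, p.Prime → ‖f p‖ ≤ 2 ^ m) (t : ℝ) {x y : ℝ} (hxy : x ≤ y) :
    DistFn m f t x ≤ DistFn m f t y := by
  refine Real.sqrt_le_sqrt (sum_le_sum_of_subset_of_nonneg ?_ fun p hp _ => ?_)
  · exact filter_subset_filter _ (Icc_subset_Icc_right (Nat.floor_le_floor hxy))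
  · exact Dsq_term_nonneg hf t (mem_filter.1 hp).2

theorem Dsq_mul_le {g : ℕ → ℂ} (hf : ∀ p : ℕ, p.Prime → ‖f p‖ ≤ 2 ^ m)
    (hg : ∀ p : ℕ, p.Prime → ‖g p‖ ≤ 2 ^ m) (t₁ t₂ x : ℝ) :
    Dsq (2 * m) (fun n => f n * g n) (t₁ + t₂) x ≤
      2 ^ m * (DistFn m f t₁ x + DistFn m g t₂ x) ^ 2 := by
  set a : ℕ → ℝ := fun p => ((2 : ℝ) ^ m - (f p * (p : ℂ) ^ (-(I * t₁))).re) / p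
  set b : ℕ → ℝ := fun p => ((2 : ℝ) ^ m - (g p * (p : ℂ) ^ (-(I * t₂))).re) / p
  have hterm : ∀ p ∈ (Icc 1 ⌊x⌋₊).filter Nat.Prime,
      ((2 : ℝ) ^ (2 * m) - (f p * g p * (p : ℂ) ^ (-(I * ↑(t₁ + t₂)))).re) / p ≤
        2 ^ m * (√(a p) + √(b p)) ^ 2 := by
    intro p hp
    have hp := (mem_filter.1 hp).2
    rw [natCast_cpow_neg_I_mul_add hp.ne_zero, pow_mul', mul_mul_mul_comm]
    exact sq_sub_re_mul_div_le (norm_mul_natCast_cpow_neg_I_mul_le hf t₁ hp)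
      (norm_mul_natCast_cpow_neg_I_mul_le hg t₂ hp) p.cast_nonneg
  calc Dsq (2 * m) (fun n => f n * g n) (t₁ + t₂) x
      ≤ 2 ^ m * ∑ p ∈ (Icc 1 ⌊x⌋₊).filter Nat.Prime, (√(a p) + √(b p)) ^ 2 := by
        rw [mul_sum]; exact sum_le_sum hterm
    _ ≤ 2 ^ m * (DistFn m f t₁ x + DistFn m g t₂ x) ^ 2 := by
        gcongr
        exact sum_sq_sqrt_add_sqrt_le _ (fun p hp => Dsq_term_nonneg hf t₁ (mem_filter.1 hp).2)
          (fun p hp => Dsq_term_nonneg hg t₂ (mem_filter.1 hp).2)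

theorem DistFn_mul_le {g : ℕ → ℂ} (hf : ∀ p : ℕ, p.Prime → ‖f p‖ ≤ 2 ^ m)
    (hg : ∀ p : ℕ, p.Prime → ‖g p‖ ≤ 2 ^ m) (t₁ t₂ x : ℝ) :
    DistFn (2 * m) (fun n => f n * g n) (t₁ + t₂) x ≤
      √(2 ^ m) * (DistFn m f t₁ x + DistFn m g t₂ x) := by
  calc DistFn (2 * m) (fun n => f n * g n) (t₁ + t₂) x
      ≤ √(2 ^ m * (DistFn m f t₁ x + DistFn m g t₂ x) ^ 2) :=
        Real.sqrt_le_sqrt (Dsq_mul_le hf hg t₁ t₂ x)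
    _ = √(2 ^ m) * (DistFn m f t₁ x + DistFn m g t₂ x) := by
        rw [Real.sqrt_mul (by positivity), Real.sqrt_sq (by unfold DistFn; positivity)]

end Distance

theorem stmt10_general (κ : ℕ) (t₁ t₂ x₁ x₂ : ℝ)
    (f₁ f₂ : ℕ → ℂ)
    (hf₁ : ∀ n : ℕ, 1 ≤ n → ‖f₁ n‖ ≤ (dnum n : ℝ) ^ κ)
    (hf₂ : ∀ n : ℕ, 1 ≤ n → ‖f₂ n‖ ≤ (dnum n : ℝ) ^ κ) :
    (2 : ℝ) ^ (-(κ : ℝ) / 2) *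
        DistFn (2 * κ) (fun n => f₁ n * f₂ n) (t₁ + t₂) (min x₁ x₂) ≤
      DistFn κ f₁ t₁ x₁ + DistFn κ f₂ t₂ x₂ := by
  have h₁ := fun p => norm_le_two_pow_of_norm_le_dnum_pow hf₁ (p := p)
  have h₂ := fun p => norm_le_two_pow_of_norm_le_dnum_pow hf₂ (p := p)
  have hscale : (2 : ℝ) ^ (-(κ : ℝ) / 2) * √(2 ^ κ) = 1 := by
    rw [Real.sqrt_eq_rpow, ← Real.rpow_natCast, ← Real.rpow_mul zero_le_two,
      ← Real.rpow_add zero_lt_two, show -(κ : ℝ) / 2 + κ * (1 / 2) = 0 by ring, Real.rpow_zero]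
  calc (2 : ℝ) ^ (-(κ : ℝ) / 2) * DistFn (2 * κ) (fun n => f₁ n * f₂ n) (t₁ + t₂) (min x₁ x₂)
      ≤ (2 : ℝ) ^ (-(κ : ℝ) / 2) *
          (√(2 ^ κ) * (DistFn κ f₁ t₁ (min x₁ x₂) + DistFn κ f₂ t₂ (min x₁ x₂))) := by
        gcongr; exact DistFn_mul_le h₁ h₂ t₁ t₂ _
    _ = DistFn κ f₁ t₁ (min x₁ x₂) + DistFn κ f₂ t₂ (min x₁ x₂) := by
        rw [← mul_assoc, hscale, one_mul]
    _ ≤ DistFn κ f₁ t₁ x₁ + DistFn κ f₂ t₂ x₂ :=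
        add_le_add (DistFn_mono h₁ t₁ (min_le_left _ _)) (DistFn_mono h₂ t₂ (min_le_right _ _))

theorem stmt10 (κ : ℕ) (hκ : 0 < κ) (t₁ t₂ x₁ x₂ : ℝ) (hx₁ : 2 ≤ x₁) (hx₂ : 2 ≤ x₂)
    (f₁ f₂ : ℕ → ℂ)
    (hf₁ : ∀ n : ℕ, 1 ≤ n → ‖f₁ n‖ ≤ (dnum n : ℝ) ^ κ)
    (hf₂ : ∀ n : ℕ, 1 ≤ n → ‖f₂ n‖ ≤ (dnum n : ℝ) ^ κ) :
    (2 : ℝ) ^ (-(κ : ℝ) / 2) *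
        DistFn (2 * κ) (fun n => f₁ n * f₂ n) (t₁ + t₂) (min x₁ x₂) ≤
      DistFn κ f₁ t₁ x₁ + DistFn κ f₂ t₂ x₂ :=
  stmt10_general κ t₁ t₂ x₁ x₂ f₁ f₂ hf₁ hf₂
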